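/- arXiv:2102.02002 — 4 statements merged into one kernel-verified Lean document; each statement's English description precedes it below -/
import Mathlib

section
/- Consider scheduling on a single parallel-batching machine with incompatible families, where each family j contains |N_j| jobs, each job i has size v_i ≤ V, and all jobs of family j have processing time q_j. Define N_j^b as the largest number such that the N_j^b largest jobs of family j fit together within capacity V, and let B_j = ⌈|N_j| / N_j^b⌉. Then there exists an optimal schedule minimizing total weighted completion time in which the number of batches used by family j is at most B_j for every family j. -/
/-- A batch in a sequence: a family label together with the set of jobs loaded in it. -/
abbrev Batch (ι : Type*) (m : ℕ) := Fin m × Finset ι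

/-- A feasible schedule on a single parallel-batching machine with incompatible
families: an ordered list of batches, each containing jobs of its own family only,
respecting the machine capacity `V`, nonempty, and such that every job is assigned
to exactly one batch. -/
structure BatchSchedule {ι : Type*} (m : ℕ) (fam : ι → Fin m) (v : ι → ℝ) (V : ℝ) where
  batches : List (Batch ι m)
  mem_family : ∀ b ∈ batches, ∀ i ∈ b.2, fam i = b.1
  capacity : ∀ b ∈ batches, ∑ i ∈ b.2, v i ≤ V
  nonempty : ∀ b ∈ batches, b.2.Nonempty
  partition : ∀ i : ι, ∃! k : Fin batches.length, i ∈ (batches.get k).2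

/-- Total weighted completion time of a sequence of batches processed back to back
from time 0: the `k`-th batch completes at the sum of the processing times
`q j` of the families of batches `0,…,k`. -/
noncomputable def batchObj {ι : Type*} {m : ℕ} (q : Fin m → ℝ) (w : ι → ℝ)
    (bs : List (Batch ι m)) : ℝ :=
  ∑ k : Fin bs.length, (∑ i ∈ (bs.get k).2, w i) *
    (∑ l : Fin bs.length, if l.1 ≤ k.1 then q (bs.get l).1 else 0)

/-! There are finitely many schedules, so an optimal one exists. Suppose an optimal schedule uses
more than `B j = ⌈|N_j| / N_j^b⌉` batches of family `j`. Then some batch of family `j` that is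
followed by a later batch of the same family holds fewer than `N_j^b` jobs, so it has room for one
job of that later batch. Moving the job there keeps every other completion time and makes that job
complete at least `q_j` earlier (if the later batch becomes empty it is dropped, which only helps),
contradicting optimality. -/

open scoped Finset

namespace List

theorem existsUnique_get_iff_countP_eq_one {α : Type*} (l : List α) (p : α → Prop)
    [DecidablePred p] : (∃! k : Fin l.length, p (l.get k)) ↔ l.countP (p ·) = 1 := by
  rw [Fintype.existsUnique_iff_card_one, Finset.card_filter]
  simp only [get_eq_getElem, Fin.sum_univ_fun_getElem l fun a => if p a then 1 else 0]
  congr! 1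
  induction l with
  | nil => simp
  | cons a t ih => by_cases h : p a <;> simp [h, ih, add_comm]

theorem exists_eq_append_cons_append_cons_of_pair_sublist {α : Type*} {x y : α} {l : List α}
    (h : [x, y].Sublist l) : ∃ A C D : List α, l = A ++ x :: (C ++ y :: D) := by
  obtain ⟨l₁, l₂, rfl, hx, hy⟩ := cons_sublist_iff.1 h
  obtain ⟨A, C₁, rfl⟩ := append_of_mem hx
  obtain ⟨C₂, D, rfl⟩ := append_of_mem (singleton_sublist.1 hy)
  exact ⟨A, C₁ ++ C₂, D, by simp⟩

/-- If `l` has more than `⌈(∑ f) / c⌉` entries, then `f` is below `c` at some entry that is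
not the last one. -/
theorem exists_pair_sublist_lt_of_ceilDiv_lt_length {α : Type*} (f : α → ℕ) {c : ℕ}
    (hc : 0 < c) {l : List α} (hpos : ∀ a ∈ l, 0 < f a)
    (hlt : ((l.map f).sum + c - 1) / c < l.length) : ∃ a b, [a, b].Sublist l ∧ f a < c := by
  obtain rfl | ⟨l', z, rfl⟩ := l.eq_nil_or_concat'
  · simp at hlt
  by_contra! hfull
  have hl' : l'.length • c ≤ (l'.map f).sum := by
    simpa using card_nsmul_le_sum (l'.map f) c (by
      simpa using fun a ha => hfull a z ((singleton_sublist.2 ha).append (.refl [z])))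
  have hz : 0 < f z := hpos z (by simp)
  rw [Nat.div_lt_iff_lt_mul hc] at hlt
  simp only [map_append, sum_append, length_append, smul_eq_mul, map_cons, map_nil, sum_cons,
    sum_nil, length_cons, length_nil, add_mul] at hlt hl'
  omega

end List

section Objective

variable {ι : Type*} {m : ℕ}

noncomputable def totalWeight (w : ι → ℝ) (bs : List (Batch ι m)) : ℝ :=
  (bs.map fun b => ∑ i ∈ b.2, w i).sum

noncomputable def makespan (q : Fin m → ℝ) (bs : List (Batch ι m)) : ℝ :=
  (bs.map fun b => q b.1).sum

@[simp] theorem totalWeight_cons (w : ι → ℝ) (b : Batch ι m) (bs : List (Batch ι m)) :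
    totalWeight w (b :: bs) = ∑ i ∈ b.2, w i + totalWeight w bs := by
  simp [totalWeight]

@[simp] theorem totalWeight_append (w : ι → ℝ) (bs bs' : List (Batch ι m)) :
    totalWeight w (bs ++ bs') = totalWeight w bs + totalWeight w bs' := by
  simp [totalWeight]

@[simp] theorem makespan_cons (q : Fin m → ℝ) (b : Batch ι m) (bs : List (Batch ι m)) :
    makespan q (b :: bs) = q b.1 + makespan q bs := by
  simp [makespan]

theorem totalWeight_nonneg {w : ι → ℝ} (hw : ∀ i, 0 ≤ w i) (bs : List (Batch ι m)) :
    0 ≤ totalWeight w bs :=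
  List.sum_nonneg <| by
    simp only [List.mem_map]
    rintro _ ⟨b, -, rfl⟩
    exact Finset.sum_nonneg fun i _ => hw i

theorem makespan_nonneg {q : Fin m → ℝ} (hq : ∀ j, 0 ≤ q j) (bs : List (Batch ι m)) :
    0 ≤ makespan q bs :=
  List.sum_nonneg <| by
    simp only [List.mem_map]
    rintro _ ⟨b, -, rfl⟩
    exact hq b.1

/-- The first batch delays every job of the list by its processing time. -/
theorem batchObj_cons (q : Fin m → ℝ) (w : ι → ℝ) (b : Batch ι m) (bs : List (Batch ι m)) :
    batchObj q w (b :: bs) = q b.1 * totalWeight w (b :: bs) + batchObj q w bs := by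
  rw [totalWeight, ← Fin.sum_univ_fun_getElem]
  simp [batchObj, Fin.sum_univ_succ, mul_add, Finset.sum_add_distrib, Finset.mul_sum, mul_comm,
    add_assoc]

theorem batchObj_append (q : Fin m → ℝ) (w : ι → ℝ) (bs bs' : List (Batch ι m)) :
    batchObj q w (bs ++ bs') =
      batchObj q w bs + makespan q bs * totalWeight w bs' + batchObj q w bs' := by
  induction bs with
  | nil => simp [batchObj, makespan]
  | cons b bs ih => simp only [List.cons_append, batchObj_cons, ih, totalWeight_cons,
      totalWeight_append, makespan_cons]; ring

theorem totalWeight_filter_nonempty (w : ι → ℝ) (bs : List (Batch ι m)) :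
    totalWeight w (bs.filter fun b => b.2.Nonempty) = totalWeight w bs := by
  induction bs with
  | nil => rfl
  | cons b bs ih => rcases b.2.eq_empty_or_nonempty with h | h <;> simp [h, ih]

theorem batchObj_filter_nonempty_le {q : Fin m → ℝ} {w : ι → ℝ} (hq : ∀ j, 0 ≤ q j)
    (hw : ∀ i, 0 ≤ w i) (bs : List (Batch ι m)) :
    batchObj q w (bs.filter fun b => b.2.Nonempty) ≤ batchObj q w bs := by
  induction bs with
  | nil => rfl
  | cons b bs ih =>
    have hobj := batchObj_cons q w b bs
    rcases b.2.eq_empty_or_nonempty with h | h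
    · rw [List.filter_cons_of_neg (by simp [h])]
      linarith [mul_nonneg (hq b.1) (totalWeight_nonneg hw (b :: bs))]
    · rw [List.filter_cons_of_pos (by simpa using h), batchObj_cons, hobj, totalWeight_cons,
        totalWeight_cons, totalWeight_filter_nonempty]
      linarith

/-- Moving weight `δ > 0` from a batch to an earlier one, without changing families, saves
at least `δ` times the processing time of the later batch. -/
theorem batchObj_lt_of_shift_weight {q : Fin m → ℝ} {w : ι → ℝ} (A C D : List (Batch ι m))
    {x y x' y' : Batch ι m} (hx : x'.1 = x.1) (hy : y'.1 = y.1) {δ : ℝ} (hδ : 0 < δ)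
    (hwx : ∑ i ∈ x'.2, w i = ∑ i ∈ x.2, w i + δ) (hwy : ∑ i ∈ y'.2, w i = ∑ i ∈ y.2, w i - δ)
    (hqy : 0 < q y.1) (hC : 0 ≤ makespan q C) :
    batchObj q w (A ++ x' :: (C ++ y' :: D)) < batchObj q w (A ++ x :: (C ++ y :: D)) := by
  simp only [batchObj_append, batchObj_cons, totalWeight_append, totalWeight_cons,
    hx, hy, hwx, hwy]
  nlinarith [mul_pos hqy hδ, mul_nonneg hC hδ.le]

end Objective

namespace BatchSchedule

variable {ι : Type*} {m : ℕ} {fam : ι → Fin m} {v : ι → ℝ} {V : ℝ}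

theorem countP_mem_eq_one [DecidableEq ι] (σ : BatchSchedule m fam v V) (i : ι) :
    σ.batches.countP (fun b => i ∈ b.2) = 1 :=
  (List.existsUnique_get_iff_countP_eq_one _ _).1 (σ.partition i)

def ofList [DecidableEq ι] (bs : List (Batch ι m)) (hfam : ∀ b ∈ bs, ∀ i ∈ b.2, fam i = b.1)
    (hcap : ∀ b ∈ bs, ∑ i ∈ b.2, v i ≤ V) (hcount : ∀ i, bs.countP (fun b => i ∈ b.2) = 1) :
    BatchSchedule m fam v V where
  batches := bs.filter fun b => b.2.Nonempty
  mem_family b hb := hfam b (List.mem_of_mem_filter hb)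
  capacity b hb := hcap b (List.mem_of_mem_filter hb)
  nonempty b hb := by simpa using (List.mem_filter.1 hb).2
  partition i := by
    refine (List.existsUnique_get_iff_countP_eq_one _ fun b : Batch ι m => i ∈ b.2).2 ?_
    rw [List.countP_filter, ← hcount i]
    exact List.countP_congr fun b _ => by simpa using fun hi => ⟨i, hi⟩

theorem nonempty_of_forall_le [Fintype ι] (hfit : ∀ i, v i ≤ V) :
    Nonempty (BatchSchedule m fam v V) := by
  classical
  refine ⟨ofList (Finset.univ.toList.map fun i => (fam i, {i})) ?_ ?_ ?_⟩
  · simp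
  · simpa using hfit
  · intro i
    rw [List.countP_map, ← List.count_eq_one_of_mem (Finset.nodup_toList _)
      (Finset.mem_toList.2 (Finset.mem_univ i))]
    exact List.countP_congr fun x _ => by simpa using eq_comm

theorem sum_map_card_eq_sum_countP [Fintype ι] [DecidableEq ι] (bs : List (Batch ι m)) :
    (bs.map fun b => #b.2).sum = ∑ i, bs.countP (fun b => i ∈ b.2) := by
  induction bs with
  | nil => simp
  | cons b bs ih =>
    simp only [List.map_cons, List.sum_cons, ih, List.countP_cons, Finset.sum_add_distrib]
    simp [add_comm]

theorem sum_card_filter_family [Fintype ι] (σ : BatchSchedule m fam v V) (j : Fin m) :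
    ((σ.batches.filter fun b => b.1 = j).map fun b => #b.2).sum = #{i | fam i = j} := by
  classical
  rw [sum_map_card_eq_sum_countP, Finset.card_filter]
  refine Finset.sum_congr rfl fun i _ => ?_
  rw [List.countP_filter]
  split_ifs with hij
  · rw [← σ.countP_mem_eq_one i]
    exact List.countP_congr fun b hb => by
      simpa using fun hi => (σ.mem_family b hb i hi).symm.trans hij
  · refine List.countP_eq_zero.2 fun b hb => ?_
    simpa using fun hi => (σ.mem_family b hb i hi).symm.trans_ne hij

theorem length_batches_le_card [Fintype ι] (σ : BatchSchedule m fam v V) :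
    σ.batches.length ≤ Fintype.card ι := by
  classical
  calc σ.batches.length = σ.batches.length • 1 := by simp
    _ ≤ (σ.batches.map fun b => #b.2).sum := by
      simpa using List.card_nsmul_le_sum (σ.batches.map fun b => #b.2) 1
        (by
          simp only [List.mem_map]
          rintro _ ⟨b, hb, rfl⟩
          exact (σ.nonempty b hb).card_pos)
    _ = Fintype.card ι := by simp [sum_map_card_eq_sum_countP, countP_mem_eq_one]

instance [Fintype ι] : Finite (BatchSchedule m fam v V) := by
  have : Finite {bs : List (Batch ι m) // bs.length ≤ Fintype.card ι} :=
    (List.finite_length_le _ _).to_subtype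
  refine Finite.of_injective (fun σ : BatchSchedule m fam v V =>
    (⟨σ.batches, σ.length_batches_le_card⟩ : {bs : List (Batch ι m) // bs.length ≤ _})) ?_
  rintro ⟨⟩ ⟨⟩ h
  cases h
  rfl

theorem disjoint_of_pair_sublist (σ : BatchSchedule m fam v V) {x y : Batch ι m}
    (h : [x, y].Sublist σ.batches) : Disjoint x.2 y.2 := by
  classical
  refine Finset.disjoint_left.2 fun i hix hiy => ?_
  have := (h.countP_le (p := fun b => i ∈ b.2)).trans_eq (σ.countP_mem_eq_one i)
  simp [hix, hiy] at this

theorem exists_batches_eq_move [DecidableEq ι] (hv : ∀ i, 0 ≤ v i)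
    (σ : BatchSchedule m fam v V) {A C D : List (Batch ι m)} {x y : Batch ι m}
    (hσ : σ.batches = A ++ x :: (C ++ y :: D)) (hfam : x.1 = y.1) {i : ι} (hiy : i ∈ y.2) (hroom : ∑ k ∈ insert i x.2, v k ≤ V) :
    ∃ σ' : BatchSchedule m fam v V, σ'.batches =
      (A ++ (x.1, insert i x.2) :: (C ++ (y.1, y.2.erase i) :: D)).filter (·.2.Nonempty) := by
  have hx : x ∈ σ.batches := by simp [hσ]
  have hy : y ∈ σ.batches := by simp [hσ]
  have hix : i ∉ x.2 :=
    Finset.disjoint_right.1 (σ.disjoint_of_pair_sublist (by simp [hσ])) hiy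
  set bs := A ++ (x.1, insert i x.2) :: (C ++ (y.1, y.2.erase i) :: D)
  have hmem : ∀ b ∈ bs, b ∈ σ.batches ∨ b = (x.1, insert i x.2) ∨ b = (y.1, y.2.erase i) := by
    intro b hb
    simp only [bs, hσ, List.mem_append, List.mem_cons] at hb ⊢
    tauto
  have hfam' : ∀ b ∈ bs, ∀ k ∈ b.2, fam k = b.1 := by
    intro b hb k hk
    rcases hmem b hb with hb | rfl | rfl
    · exact σ.mem_family b hb k hk
    · rcases Finset.mem_insert.1 hk with rfl | hk
      · rw [σ.mem_family y hy k hiy, hfam]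
      · exact σ.mem_family x hx k hk
    · exact σ.mem_family y hy k (Finset.mem_of_mem_erase hk)
  have hcap' : ∀ b ∈ bs, ∑ k ∈ b.2, v k ≤ V := by
    intro b hb
    rcases hmem b hb with hb | rfl | rfl
    · exact σ.capacity b hb
    · exact hroom
    · exact (Finset.sum_le_sum_of_subset_of_nonneg (Finset.erase_subset i y.2)
        fun k _ _ => hv k).trans (σ.capacity y hy)
  have hcount' : ∀ k, bs.countP (fun b => k ∈ b.2) = 1 := by
    intro k
    rw [← σ.countP_mem_eq_one k, hσ]
    by_cases hk : k = i
    · subst hk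
      simp [bs, hix, hiy, add_assoc]
    · simp [bs, hk, List.countP_cons]
  exact ⟨ofList bs hfam' hcap' hcount', rfl⟩

theorem exists_batchObj_lt_of_pair_sublist [DecidableEq ι] {q : Fin m → ℝ} {w : ι → ℝ}
    (hv : ∀ i, 0 ≤ v i) (hq : ∀ j, 0 < q j) (hw : ∀ i, 0 < w i) (σ : BatchSchedule m fam v V)
    {x y : Batch ι m} (hxy : [x, y].Sublist σ.batches) (hfam : x.1 = y.1)
    (hroom : ∀ i ∈ y.2, ∑ k ∈ insert i x.2, v k ≤ V) :
    ∃ σ' : BatchSchedule m fam v V, batchObj q w σ'.batches < batchObj q w σ.batches := by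
  obtain ⟨A, C, D, hσ⟩ := List.exists_eq_append_cons_append_cons_of_pair_sublist hxy
  obtain ⟨i, hiy⟩ := σ.nonempty y (hxy.subset (by simp))
  have hix : i ∉ x.2 := Finset.disjoint_right.1 (σ.disjoint_of_pair_sublist hxy) hiy
  obtain ⟨σ', hσ'⟩ := σ.exists_batches_eq_move hv hσ hfam hiy (hroom i hiy)
  refine ⟨σ', ?_⟩
  rw [hσ', hσ]
  refine (batchObj_filter_nonempty_le (fun j => (hq j).le) (fun i => (hw i).le) _).trans_lt ?_
  refine batchObj_lt_of_shift_weight A C D rfl rfl (hw i)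
    (by rw [Finset.sum_insert hix, add_comm]) ?_ (hq _)
    (makespan_nonneg (fun j => (hq j).le) C)
  rw [← Finset.sum_erase_add _ _ hiy]
  ring

end BatchSchedule

theorem exists_optimal_schedule_with_few_batches_general
    {ι : Type*} [Fintype ι] {m : ℕ}
    (fam : ι → Fin m) (v w : ι → ℝ) (V : ℝ) (q : Fin m → ℝ)
    (hq : ∀ j, 0 < q j) (hw : ∀ i, 0 < w i)
    (hv0 : ∀ i, 0 ≤ v i)
    (Nb : Fin m → ℕ) (hNb1 : ∀ j, 1 ≤ Nb j)
    (hNb : ∀ j, ∀ S : Finset ι, (∀ i ∈ S, fam i = j) → S.card ≤ Nb j →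
      ∑ i ∈ S, v i ≤ V)
    (B : Fin m → ℕ)
    (hB : ∀ j, B j = ((Finset.univ.filter fun i => fam i = j).card + Nb j - 1) / Nb j) :
    ∃ σ : BatchSchedule m fam v V,
      (∀ σ' : BatchSchedule m fam v V,
        batchObj q w σ.batches ≤ batchObj q w σ'.batches) ∧
      ∀ j, (σ.batches.filter fun b => b.1 = j).length ≤ B j := by
  classical
  have : Nonempty (BatchSchedule m fam v V) := BatchSchedule.nonempty_of_forall_le fun i => by
    simpa using hNb (fam i) {i} (by simp) (by simpa using hNb1 (fam i))
  obtain ⟨σ, hσ⟩ := Finite.exists_min fun σ : BatchSchedule m fam v V => batchObj q w σ.batches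
  refine ⟨σ, hσ, fun j => ?_⟩
  by_contra! hlong
  set L := σ.batches.filter fun b => b.1 = j
  have hLj : ∀ b ∈ L, b ∈ σ.batches ∧ b.1 = j := by simp [L]
  obtain ⟨x, y, hxy, hx⟩ := List.exists_pair_sublist_lt_of_ceilDiv_lt_length (·.2.card) (hNb1 j)
    (fun b hb => (σ.nonempty b (hLj b hb).1).card_pos)
    (by rwa [σ.sum_card_filter_family, ← hB j])
  have hxL := hLj x (hxy.subset (by simp))
  have hyL := hLj y (hxy.subset (by simp))
  obtain ⟨σ', hσ'⟩ := σ.exists_batchObj_lt_of_pair_sublist hv0 hq hw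
    (hxy.trans List.filter_sublist) (hxL.2.trans hyL.2.symm) fun i hi => by
      refine hNb j _ (fun k hk => ?_) ((Finset.card_insert_le i x.2).trans hx)
      rcases Finset.mem_insert.1 hk with rfl | hk
      · exact (σ.mem_family y hyL.1 k hi).trans hyL.2
      · exact (σ.mem_family x hxL.1 k hk).trans hxL.2
  exact (hσ σ').not_gt hσ'

/-- With `Nb j` such that any set of at most `Nb j` jobs of family `j`
fits within capacity, and `B j = ⌈|N_j| / Nb j⌉`, there exists an optimal schedule
(minimizing total weighted completion time) using at most `B j` batches of each
family `j`. -/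
theorem exists_optimal_schedule_with_few_batches
    {ι : Type*} [Fintype ι] [DecidableEq ι] {m : ℕ}
    (fam : ι → Fin m) (v w : ι → ℝ) (V : ℝ) (q : Fin m → ℝ)
    (hq : ∀ j, 0 < q j) (hw : ∀ i, 0 < w i)
    (hv0 : ∀ i, 0 ≤ v i) (hvV : ∀ i, v i ≤ V)
    (Nb : Fin m → ℕ) (hNb1 : ∀ j, 1 ≤ Nb j)
    (hNb : ∀ j, ∀ S : Finset ι, (∀ i ∈ S, fam i = j) → S.card ≤ Nb j →
      ∑ i ∈ S, v i ≤ V)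
    (B : Fin m → ℕ)
    (hB : ∀ j, B j = ((Finset.univ.filter fun i => fam i = j).card + Nb j - 1) / Nb j) :
    ∃ σ : BatchSchedule m fam v V,
      (∀ σ' : BatchSchedule m fam v V,
        batchObj q w σ.batches ≤ batchObj q w σ'.batches) ∧
      ∀ j, (σ.batches.filter fun b => b.1 = j).length ≤ B j :=
  exists_optimal_schedule_with_few_batches_general fam v w V q hq hw hv0 Nb hNb1 hNb B hB
end

section
/- There exists an instance of the batch loading and scheduling problem such that first solving a minimum-cardinality bin packing per family (i.e., batching the jobs of each family into the fewest feasible batches) and then optimally sequencing the resulting batches yields a schedule with strictly larger total weighted completion time than the optimum. In particular, for the instance with families A = {jobs 1,2,3,4} and B = {jobs 5,6}, unit processing times, weights (20,20,11,10,10,20), sizes (1,1,3,3,2,2), and capacity V = 4, every schedule whose family-A batching uses the minimum number of batches (two batches) has objective at least 181, whereas the optimum is 173. -/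
/-!
The four jobs of family A have total size 8, so they need at least two batches. If they get
exactly two, the two size-3 jobs are separated and each A-batch weighs at most 31, while family B
weighs 30 in all; so the first batch weighs at most 31 and the first two at most 61. As the total
weight is 91, the objective is at least `3 · 91 - 31 - 61 = 181`. Putting the two weight-20 jobs of
family A into one batch instead, the sequence `{1,2}, {5,6}, {3}, {4}` costs 173.
-/

/-- Weights of the six jobs (jobs 1,…,6 are indexed 0,…,5). -/
def wt : Fin 6 → ℕ := ![20, 20, 11, 10, 10, 20]

/-- Sizes of the six jobs. -/
def sz : Fin 6 → ℕ := ![1, 1, 3, 3, 2, 2]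

/-- Families: jobs 1–4 are family A (`0`), jobs 5–6 are family B (`1`). -/
def fm : Fin 6 → Fin 2 := ![0, 0, 0, 0, 1, 1]

/-- A feasible schedule: a sequence of batches partitioning the six jobs, each
batch containing jobs of a single family with total size at most `4`. -/
def Feasible (bs : List (Finset (Fin 6))) : Prop :=
  (∀ i : Fin 6, ∃! k : Fin bs.length, i ∈ bs.get k) ∧
  (∀ b ∈ bs, ∀ i ∈ b, ∀ j ∈ b, fm i = fm j) ∧
  (∀ b ∈ bs, ∑ i ∈ b, sz i ≤ 4)

/-- Total weighted completion time: with unit processing times the `k`-th batch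
completes at time `k + 1`. -/
def obj (bs : List (Finset (Fin 6))) : ℕ :=
  ∑ k : Fin bs.length, (k.1 + 1) * ∑ i ∈ bs.get k, wt i

/-- The number of batches of the schedule containing family-A jobs. -/
def countA (bs : List (Finset (Fin 6))) : ℕ :=
  (bs.filter fun b => decide (∃ i ∈ b, fm i = 0)).length

open Finset

lemma List.length_filter_eq_card_filter {α : Type*} (l : List α) (p : α → Bool) :
    (l.filter p).length = #{k : Fin l.length | p (l.get k)} := by
  induction l with
  | nil => simp
  | cons a t ih =>
    simp only [List.filter_cons, card_filter, List.length_cons, Fin.sum_univ_succ] at *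
    by_cases h : p a <;> simp [h, ih, add_comm]

section Partition

variable {ι α : Type*} {B : ι → Finset α}

lemma pairwiseDisjoint_of_existsUnique_mem (hB : ∀ a, ∃! k, a ∈ B k) :
    (Set.univ : Set ι).PairwiseDisjoint B := fun _ _ _ _ hkl =>
  disjoint_left.mpr fun a hk hl => hkl ((hB a).unique hk hl)

lemma sum_sum_eq_sum_of_existsUnique_mem {M : Type*} [Fintype ι] [Fintype α] [AddCommMonoid M]
    (hB : ∀ a, ∃! k, a ∈ B k) (f : α → M) : ∑ k, ∑ a ∈ B k, f a = ∑ a, f a := by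
  classical
  rw [← sum_biUnion (by simpa using pairwiseDisjoint_of_existsUnique_mem hB)]
  congr
  ext a
  simpa using (hB a).exists

end Partition

/-- Every batch from the `m`-th on completes at time at least `m + 1`; the truncated `m - k`
pays back the shortfall of the earlier ones. -/
lemma succ_mul_sum_le_sum_succ_mul_add {n : ℕ} (W : Fin n → ℕ) (m : ℕ) :
    (m + 1) * ∑ k, W k ≤ ∑ k : Fin n, (k.1 + 1) * W k + ∑ k : Fin n, (m - k.1) * W k := by
  rw [mul_sum, ← sum_add_distrib]
  gcongr with k
  rw [← add_mul]
  exact Nat.mul_le_mul_right _ (by omega)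

lemma three_mul_sum_le {n : ℕ} (W : Fin n → ℕ) (hn : 1 < n) :
    3 * ∑ k, W k ≤ ∑ k : Fin n, (k.1 + 1) * W k + (2 * W ⟨0, by omega⟩ + W ⟨1, hn⟩) := by
  have rebate : ∑ k : Fin n, (2 - k.1) * W k = 2 * W ⟨0, by omega⟩ + W ⟨1, hn⟩ := by
    rw [Fintype.sum_eq_add ⟨0, by omega⟩ ⟨1, hn⟩ (by simp [Fin.ext_iff]) fun k hk => ?_]
    · simp
    · simp only [ne_eq, Fin.ext_iff] at hk
      simp [show 2 - k.1 = 0 by omega]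
  simpa [rebate] using succ_mul_sum_le_sum_succ_mul_add W 2

def batchesOf (bs : List (Finset (Fin 6))) (c : Fin 2) : Finset (Fin bs.length) :=
  {k | ∃ i ∈ bs.get k, fm i = c}

lemma countA_eq_card_batchesOf (bs : List (Finset (Fin 6))) : countA bs = #(batchesOf bs 0) := by
  simp [countA, batchesOf, List.length_filter_eq_card_filter]

lemma sum_wt_le_of_forall_fm_ne_zero :
    ∀ b : Finset (Fin 6), (∀ i ∈ b, fm i ≠ 0) → ∑ i ∈ b, wt i ≤ 30 := by
  decide

/-- The two size-3 jobs need separate batches, so each batch of a two-batch packing of family A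
holds only one of the weight-20 jobs and weighs at most `20 + 11`. -/
lemma sum_wt_le_of_two_batch_packing :
    ∀ b : Finset (Fin 6), (∀ i ∈ b, fm i = 0) → ∑ i ∈ b, sz i ≤ 4 →
      ∑ i with fm i = 0 ∧ i ∉ b, sz i ≤ 4 → ∑ i ∈ b, wt i ≤ 31 := by
  decide

lemma sum_wt_get_le_of_notMem_batchesOf {bs : List (Finset (Fin 6))} {k : Fin bs.length}
    (hk : k ∉ batchesOf bs 0) : ∑ i ∈ bs.get k, wt i ≤ 30 :=
  sum_wt_le_of_forall_fm_ne_zero _ fun i hi hi0 => hk (mem_filter.mpr ⟨mem_univ k, i, hi, hi0⟩)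

namespace Feasible

variable {bs : List (Finset (Fin 6))}

lemma disjoint (hf : Feasible bs) {k l : Fin bs.length} (hkl : k ≠ l) :
    Disjoint (bs.get k) (bs.get l) :=
  pairwiseDisjoint_of_existsUnique_mem hf.1 (Set.mem_univ k) (Set.mem_univ l) hkl

lemma sum_sum_get (hf : Feasible bs) {M : Type*} [AddCommMonoid M] (f : Fin 6 → M) :
    ∑ k, ∑ i ∈ bs.get k, f i = ∑ i, f i :=
  sum_sum_eq_sum_of_existsUnique_mem hf.1 f

lemma fm_eq_of_mem_batchesOf (hf : Feasible bs) {c : Fin 2} {k : Fin bs.length}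
    (hk : k ∈ batchesOf bs c) {i : Fin 6} (hi : i ∈ bs.get k) : fm i = c := by
  obtain ⟨j, hj, rfl⟩ := (mem_filter.mp hk).2
  exact hf.2.1 _ (bs.get_mem k) i hi j hj

lemma sum_sz_le_card_batchesOf (hf : Feasible bs) (c : Fin 2) :
    ∑ i with fm i = c, sz i ≤ 4 * #(batchesOf bs c) := by
  calc ∑ i with fm i = c, sz i
      = ∑ k, ∑ i ∈ bs.get k with fm i = c, sz i := by
        simp only [sum_filter, hf.sum_sum_get]
    _ = ∑ k ∈ batchesOf bs c, ∑ i ∈ bs.get k with fm i = c, sz i := by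
        refine (sum_subset (subset_univ _) fun k _ hk => sum_eq_zero fun i hi => ?_).symm
        rw [mem_filter] at hi
        exact absurd (mem_filter.mpr ⟨mem_univ k, i, hi.1, hi.2⟩) hk
    _ ≤ ∑ _k ∈ batchesOf bs c, 4 :=
        sum_le_sum fun k _ => (sum_le_sum_of_subset (filter_subset _ _)).trans
          (hf.2.2 _ (bs.get_mem k))
    _ = 4 * #(batchesOf bs c) := by simp [mul_comm]

lemma sum_wt_get_le_of_batchesOf_eq_pair (hf : Feasible bs) {k l : Fin bs.length}
    (hkl : batchesOf bs 0 = {k, l}) : ∑ i ∈ bs.get k, wt i ≤ 31 := by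
  have hk : k ∈ batchesOf bs 0 := by simp [hkl]
  refine sum_wt_le_of_two_batch_packing _ (fun i hi => hf.fm_eq_of_mem_batchesOf hk hi)
    (hf.2.2 _ (bs.get_mem k))
    ((sum_le_sum_of_subset fun i hi => ?_).trans (hf.2.2 _ (bs.get_mem l)))
  obtain ⟨hiA, hik⟩ := (mem_filter.mp hi).2
  obtain ⟨m, him, -⟩ := hf.1 i
  have hm : m ∈ batchesOf bs 0 := mem_filter.mpr ⟨mem_univ m, i, him, hiA⟩
  rw [hkl, mem_insert, mem_singleton] at hm
  rcases hm with rfl | rfl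
  · exact absurd him hik
  · exact him

lemma sum_wt_get_le (hf : Feasible bs) (h2 : countA bs = 2) (k : Fin bs.length) :
    ∑ i ∈ bs.get k, wt i ≤ 31 := by
  by_cases hk : k ∈ batchesOf bs 0
  · rw [countA_eq_card_batchesOf, card_eq_two] at h2
    obtain ⟨x, y, -, hxy⟩ := h2
    rw [hxy, mem_insert, mem_singleton] at hk
    rcases hk with rfl | rfl
    · exact hf.sum_wt_get_le_of_batchesOf_eq_pair hxy
    · exact hf.sum_wt_get_le_of_batchesOf_eq_pair (hxy.trans (pair_comm _ _))
  · exact (sum_wt_get_le_of_notMem_batchesOf hk).trans (by norm_num)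

lemma sum_wt_get_add_le (hf : Feasible bs) (h2 : countA bs = 2) {k l : Fin bs.length}
    (hkl : k ≠ l) : ∑ i ∈ bs.get k, wt i + ∑ i ∈ bs.get l, wt i ≤ 61 := by
  by_cases hA : k ∈ batchesOf bs 0 ∧ l ∈ batchesOf bs 0
  · rw [← sum_union (hf.disjoint hkl)]
    calc ∑ i ∈ bs.get k ∪ bs.get l, wt i ≤ ∑ i with fm i = 0, wt i := by
          refine sum_le_sum_of_subset fun i hi => mem_filter.mpr ⟨mem_univ i, ?_⟩
          rcases mem_union.mp hi with hi | hi
          · exact hf.fm_eq_of_mem_batchesOf hA.1 hi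
          · exact hf.fm_eq_of_mem_batchesOf hA.2 hi
      _ = 61 := by decide
  · have hk := hf.sum_wt_get_le h2 k
    have hl := hf.sum_wt_get_le h2 l
    rcases not_and_or.mp hA with hA | hA
    · have := sum_wt_get_le_of_notMem_batchesOf hA
      omega
    · have := sum_wt_get_le_of_notMem_batchesOf hA
      omega

lemma le_obj_of_countA_eq_two (hf : Feasible bs) (h2 : countA bs = 2) : 181 ≤ obj bs := by
  have hn : 2 ≤ bs.length := by
    simpa [h2] using (countA_eq_card_batchesOf bs).trans_le (card_le_univ _)
  have htotal : ∑ k, ∑ i ∈ bs.get k, wt i = 91 := (hf.sum_sum_get wt).trans (by decide)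
  have hseq := three_mul_sum_le (fun k => ∑ i ∈ bs.get k, wt i) hn
  have h0 := hf.sum_wt_get_le h2 ⟨0, by omega⟩
  have h01 := hf.sum_wt_get_add_le h2 (k := ⟨0, by omega⟩) (l := ⟨1, hn⟩) (by simp)
  simp only [htotal] at hseq
  unfold obj
  omega

end Feasible

/-- Bin packing first can be suboptimal: the minimum number of
batches for family A is two, every feasible schedule whose family-A batching uses
only two batches has objective at least `181`, yet the overall optimum is `173`. -/
theorem bin_packing_first_is_suboptimal :
    (∀ bs : List (Finset (Fin 6)), Feasible bs → 2 ≤ countA bs) ∧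
    (∀ bs : List (Finset (Fin 6)), Feasible bs → countA bs = 2 → 181 ≤ obj bs) ∧
    (∃ bs : List (Finset (Fin 6)), Feasible bs ∧ obj bs = 173) := by
  refine ⟨fun bs hf => ?_, fun bs hf h2 => hf.le_obj_of_countA_eq_two h2,
    [{0, 1}, {4, 5}, {2}, {3}], ?_, by decide⟩
  · have hvolume := hf.sum_sz_le_card_batchesOf 0
    rw [show ∑ i with fm i = 0, sz i = 8 by decide] at hvolume
    rw [countA_eq_card_batchesOf]
    omega
  · exact ⟨by simp only [ExistsUnique]; decide, by decide, by decide⟩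
end

section
/- There exists a fractional feasible solution to the LP relaxation of the set-partitioning formulation of the batch scheduling problem for which no pair of jobs (i, i') satisfies 0 < Σ_{s ∋ i,i'} Σ_t z_{st} < 1; that is, the Ryan–Foster branching rule fails to identify a pair of jobs to branch on even though the solution is fractional. -/
/-- Batch `s` covers job `i`: batch `0 = {i}` covers job `0 = i`, batch
`1 = {i'}` covers job `1 = i'` (singleton batches). -/
def covers (s i : Fin 2) : Prop := s = i

instance : ∀ s i : Fin 2, Decidable (covers s i) := fun s i => decEq s i

/-- There is a fractional feasible solution to the LP relaxation
of the set-partitioning formulation (two unit-weight unit-time jobs of one family,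
singleton batches, two periods) such that for no pair of jobs `(i, i')` is
`0 < Σ_{s ∋ i,i'} Σ_t z_{st} < 1`: the Ryan–Foster branching rule finds no pair
of jobs to branch on even though the solution is fractional. -/
theorem ryan_foster_branching_can_fail :
    ∃ z : Fin 2 → Fin 2 → ℚ,
      (∀ s t, 0 ≤ z s t ∧ z s t ≤ 1) ∧
      -- machine occupancy: at most one batch in each time period
      (∀ t : Fin 2, ∑ s : Fin 2, z s t ≤ 1) ∧
      -- covering: each job is covered exactly once
      (∀ i : Fin 2,
        ∑ s ∈ Finset.univ.filter (fun s => covers s i), ∑ t : Fin 2, z s t = 1) ∧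
      -- the solution is fractional
      (∃ s t, z s t ≠ 0 ∧ z s t ≠ 1) ∧
      -- Ryan–Foster fails: no pair of jobs to branch on
      (∀ i i' : Fin 2,
        ¬ (0 < ∑ s ∈ Finset.univ.filter (fun s => covers s i ∧ covers s i'),
              ∑ t : Fin 2, z s t ∧
           ∑ s ∈ Finset.univ.filter (fun s => covers s i ∧ covers s i'),
              ∑ t : Fin 2, z s t < 1)) := by
  refine ⟨fun _ _ => 1/2, fun s t => by norm_num, fun t => by
    simp [Fin.sum_univ_two], fun i => ?_, ⟨0, 0, by norm_num⟩, fun i i' => ?_⟩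
  · fin_cases i <;> simp [covers, Finset.sum_filter, Fin.sum_univ_two] <;> norm_num <;> decide
  · fin_cases i <;> fin_cases i' <;>
      simp [covers, Finset.sum_filter, Fin.sum_univ_two] <;> norm_num <;> decide
end

section
/- There is an instance where solving the batching problem optimally for each family in isolation and then sequencing all resulting batches by WSPT is strictly suboptimal: for the instance with unit processing times, family A jobs (weights 20,20,11,10; sizes 1,1,3,3), family B jobs (weights 10,20; sizes 2,2), and capacity 4, the batching {1,3},{2,4} is optimal for family A alone and {5,6} is optimal for family B alone, yet the best sequencing of these three batches has objective 181 > 173, the overall optimum. -/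
/-- A feasible schedule of the jobs of `S` only: a sequence of batches
partitioning `S`, each batch containing jobs of a single family with total size
at most `4`. -/
def FeasibleOn (S : Finset (Fin 6)) (bs : List (Finset (Fin 6))) : Prop :=
  (∀ i ∈ S, ∃! k : Fin bs.length, i ∈ bs.get k) ∧
  (∀ b ∈ bs, ∀ i ∈ b, i ∈ S) ∧
  (∀ b ∈ bs, ∀ i ∈ b, ∀ j ∈ b, fm i = fm j) ∧
  (∀ b ∈ bs, ∑ i ∈ b, sz i ≤ 4)

/-- The family-A jobs (jobs 1,2,3,4). -/
def famA : Finset (Fin 6) := {0, 1, 2, 3}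

/-- The family-B jobs (jobs 5,6). -/
def famB : Finset (Fin 6) := {4, 5}

/-!
Write `w_k` for the weight of the `k`-th batch and `W` for the total weight. Since
`∑ (k+1) w_k = ∑_j ∑_{k ≥ j} w_k`, keeping only the first `m` of these tail sums gives
`obj ≥ (m+1) W - ∑_{k<m} (m-k) w_k`. Capacity forces at least two batches for family A and
three for the whole instance, and a finite search over pairwise disjoint feasible batches bounds
the subtracted term by `92` and `191` respectively: `3·61 - 92 = 91` and `4·91 - 191 = 173`.
The value `181` is read off the six orders of the three per-family batches.
-/

def batchWeight (b : Finset (Fin 6)) : ℕ := ∑ i ∈ b, wt i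

lemma obj_cons (b : Finset (Fin 6)) (bs : List (Finset (Fin 6))) :
    obj (b :: bs) = ((b :: bs).map batchWeight).sum + obj bs := by
  have hsucc (k : Fin bs.length) :
      ((k.succ : ℕ) + 1) * batchWeight ((b :: bs).get k.succ)
        = batchWeight (bs.get k) + (k + 1) * batchWeight (bs.get k) := by
    change ((k : ℕ) + 1 + 1) * batchWeight (bs.get k) = _
    ring
  change ∑ k : Fin (bs.length + 1), (k.1 + 1) * batchWeight ((b :: bs).get k) = _
  rw [Fin.sum_univ_succ, Finset.sum_congr rfl fun k _ => hsucc k, Finset.sum_add_distrib,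
    List.map_cons, List.sum_cons, ← Fin.sum_univ_fun_getElem]
  simp only [Fin.val_zero, List.get_eq_getElem, zero_add, one_mul, add_assoc]
  rfl

lemma sum_range_sum_map_drop_le_obj (bs : List (Finset (Fin 6))) (m : ℕ) :
    ∑ j ∈ Finset.range m, ((bs.drop j).map batchWeight).sum ≤ obj bs := by
  induction m generalizing bs with
  | zero => simp
  | succ m ih =>
    rw [Finset.sum_range_succ']
    cases bs with
    | nil => simp
    | cons b bs =>
      simp only [List.drop_succ_cons, List.drop_zero, obj_cons]
      linarith [ih bs]

def IsBatch (b : Finset (Fin 6)) : Prop :=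
  (∀ i ∈ b, ∀ j ∈ b, fm i = fm j) ∧ ∑ i ∈ b, sz i ≤ 4

instance : DecidablePred IsBatch := fun _ => inferInstanceAs (Decidable (_ ∧ _))

namespace FeasibleOn

variable {S : Finset (Fin 6)} {bs : List (Finset (Fin 6))}

lemma disjoint_get (h : FeasibleOn S bs) {k l : Fin bs.length} (hkl : k ≠ l) :
    Disjoint (bs.get k) (bs.get l) := by
  refine Finset.disjoint_left.2 fun i hik hil => hkl ?_
  obtain ⟨_, -, hunique⟩ := h.1 i (h.2.1 _ (List.get_mem bs k) i hik)
  exact (hunique k hik).trans (hunique l hil).symm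

lemma pairwise_disjoint (h : FeasibleOn S bs) : bs.Pairwise Disjoint :=
  List.pairwise_iff_get.2 fun _ _ hkl => h.disjoint_get hkl.ne

lemma isBatch (h : FeasibleOn S bs) {b : Finset (Fin 6)} (hb : b ∈ bs) : IsBatch b :=
  ⟨h.2.2.1 b hb, h.2.2.2 b hb⟩

lemma subset (h : FeasibleOn S bs) {b : Finset (Fin 6)} (hb : b ∈ bs) : b ⊆ S :=
  h.2.1 b hb

lemma sum_map_sum (h : FeasibleOn S bs) (f : Fin 6 → ℕ) :
    (bs.map fun b => ∑ i ∈ b, f i).sum = ∑ i ∈ S, f i := by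
  have hcover : Finset.univ.biUnion bs.get = S := by
    ext i
    simp only [Finset.mem_biUnion, Finset.mem_univ, true_and]
    exact ⟨fun ⟨k, hk⟩ => h.subset (List.get_mem bs k) hk,
      fun hi => (h.1 i hi).exists⟩
  rw [← hcover, Finset.sum_biUnion fun k _ l _ hkl => h.disjoint_get hkl,
    ← Fin.sum_univ_fun_getElem]
  rfl

lemma sum_sz_le (h : FeasibleOn S bs) : ∑ i ∈ S, sz i ≤ 4 * bs.length := by
  rw [← h.sum_map_sum sz, mul_comm, ← smul_eq_mul,
    ← List.length_map (f := fun b => ∑ i ∈ b, sz i)]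
  exact List.sum_le_card_nsmul _ _ (by simpa using h.2.2.2)

end FeasibleOn

-- The hypotheses are interleaved so that `decide` discards a batch before enumerating the next.
set_option maxRecDepth 10000 in
lemma two_mul_batchWeight_add_batchWeight_le_of_subset_famA :
    ∀ b₀, IsBatch b₀ → b₀ ⊆ famA → ∀ b₁, IsBatch b₁ → b₁ ⊆ famA → Disjoint b₀ b₁ →
      2 * batchWeight b₀ + batchWeight b₁ ≤ 92 := by
  decide

set_option maxRecDepth 10000 in
lemma three_mul_batchWeight_add_two_mul_batchWeight_add_batchWeight_le :
    ∀ b₀, IsBatch b₀ → ∀ b₁, IsBatch b₁ → Disjoint b₀ b₁ →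
      ∀ b₂, IsBatch b₂ → Disjoint b₀ b₂ → Disjoint b₁ b₂ →
      3 * batchWeight b₀ + 2 * batchWeight b₁ + batchWeight b₂ ≤ 191 := by
  decide

lemma le_obj_of_feasibleOn_famA {bs : List (Finset (Fin 6))} (h : FeasibleOn famA bs) :
    91 ≤ obj bs := by
  have hlen : 2 ≤ bs.length := by
    have hsz : ∑ i ∈ famA, sz i = 8 := by decide
    linarith [h.sum_sz_le]
  obtain ⟨b₀, b₁, rest, rfl⟩ : ∃ b₀ b₁ rest, bs = b₀ :: b₁ :: rest := by
    match bs, hlen with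
    | b₀ :: b₁ :: rest, _ => exact ⟨b₀, b₁, rest, rfl⟩
  have hW : ((b₀ :: b₁ :: rest).map batchWeight).sum = 61 := h.sum_map_sum wt
  have hdisj : Disjoint b₀ b₁ := List.rel_of_pairwise_cons h.pairwise_disjoint (by simp)
  have hsearch := two_mul_batchWeight_add_batchWeight_le_of_subset_famA
    b₀ (h.isBatch (by simp)) (h.subset (by simp))
    b₁ (h.isBatch (by simp)) (h.subset (by simp)) hdisj
  have htails := sum_range_sum_map_drop_le_obj (b₀ :: b₁ :: rest) 3
  simp only [Finset.sum_range_succ, Finset.sum_range_zero, List.drop_zero, List.drop_succ_cons,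
    List.map_cons, List.sum_cons] at htails hW
  omega

lemma le_obj_of_feasibleOn_famB {bs : List (Finset (Fin 6))} (h : FeasibleOn famB bs) :
    30 ≤ obj bs := by
  have hW : (bs.map batchWeight).sum = 30 := h.sum_map_sum wt
  simpa [hW] using sum_range_sum_map_drop_le_obj bs 1

lemma le_obj_of_feasibleOn_univ {bs : List (Finset (Fin 6))} (h : FeasibleOn Finset.univ bs) :
    173 ≤ obj bs := by
  have hlen : 3 ≤ bs.length := by
    have hsz : ∑ i, sz i = 12 := by decide
    linarith [h.sum_sz_le]
  obtain ⟨b₀, b₁, b₂, rest, rfl⟩ : ∃ b₀ b₁ b₂ rest, bs = b₀ :: b₁ :: b₂ :: rest := by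
    match bs, hlen with
    | b₀ :: b₁ :: b₂ :: rest, _ => exact ⟨b₀, b₁, b₂, rest, rfl⟩
  have hW : ((b₀ :: b₁ :: b₂ :: rest).map batchWeight).sum = 91 := h.sum_map_sum wt
  have hdisj := h.pairwise_disjoint
  simp only [List.pairwise_cons, List.mem_cons, forall_eq_or_imp] at hdisj
  have hsearch := three_mul_batchWeight_add_two_mul_batchWeight_add_batchWeight_le
    b₀ (h.isBatch (by simp)) b₁ (h.isBatch (by simp)) hdisj.1.1
    b₂ (h.isBatch (by simp)) hdisj.1.2.1 hdisj.2.1.1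
  have htails := sum_range_sum_map_drop_le_obj (b₀ :: b₁ :: b₂ :: rest) 4
  simp only [Finset.sum_range_succ, Finset.sum_range_zero, List.drop_zero, List.drop_succ_cons,
    List.map_cons, List.sum_cons] at htails hW
  omega

-- `List.permutations` is defined by well-founded recursion, which `decide` cannot unfold.
lemma le_obj_of_mem_permutations' :
    ∀ bs ∈ ([{0, 2}, {1, 3}, {4, 5}] : List (Finset (Fin 6))).permutations', 181 ≤ obj bs := by
  decide

/-- Solving each family in isolation and then sequencing by WSPT
can be strictly suboptimal: the batching `{1,3}, {2,4}` is optimal for family A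
alone (value 91) and `{5,6}` is optimal for family B alone (value 30), yet the best
sequencing of these three batches has objective `181`, strictly larger than the
overall optimum `173`. -/
theorem per_family_batching_then_wspt_suboptimal :
    -- `{1,3},{2,4}` is an optimal schedule for family A alone
    (FeasibleOn famA [{0, 2}, {1, 3}] ∧ obj [{0, 2}, {1, 3}] = 91 ∧
      ∀ bs, FeasibleOn famA bs → 91 ≤ obj bs) ∧
    -- `{5,6}` is an optimal schedule for family B alone
    (FeasibleOn famB [{4, 5}] ∧ obj [{4, 5}] = 30 ∧
      ∀ bs, FeasibleOn famB bs → 30 ≤ obj bs) ∧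
    -- the best sequencing of the three batches has objective exactly 181
    ((∀ bs : List (Finset (Fin 6)),
        bs.Perm [{0, 2}, {1, 3}, {4, 5}] → 181 ≤ obj bs) ∧
      (∃ bs : List (Finset (Fin 6)),
        bs.Perm [{0, 2}, {1, 3}, {4, 5}] ∧ obj bs = 181)) ∧
    -- whereas the overall optimum over all six jobs is 173
    ((∃ bs, FeasibleOn Finset.univ bs ∧ obj bs = 173) ∧
      ∀ bs, FeasibleOn Finset.univ bs → 173 ≤ obj bs) ∧
    (181 : ℕ) > 173 := by
  refine ⟨⟨?_, by decide, fun _ => le_obj_of_feasibleOn_famA⟩,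
    ⟨?_, by decide, fun _ => le_obj_of_feasibleOn_famB⟩,
    ⟨fun bs hbs => le_obj_of_mem_permutations' bs (List.mem_permutations'.2 hbs),
      [{0, 2}, {1, 3}, {4, 5}], .refl _, by decide⟩,
    ⟨⟨[{0, 1}, {4, 5}, {2}, {3}], ?_, by decide⟩, fun _ => le_obj_of_feasibleOn_univ⟩,
    by norm_num⟩
  all_goals unfold FeasibleOn ExistsUnique; decide
end
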